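/- Let p be a closed Dice program (a sequence of non-recursive function definitions followed by a main expression) and suppose ∅, ∅ ⊢ p : τ ⤳ (φ̂, γ, w). Then for any value v : τ, the unnormalized semantics satisfies ⟦p⟧(v) = WMC((φ̂ ⇔τ v) ∧ γ, w). -/

import Mathlib

/-! The Dice language with Booleans and tuples (no function calls), its
unnormalized denotational semantics, the typed compilation to weighted Boolean
formulas, and the correctness statement relating the two via weighted model
counting. -/

/-- Dice types: `τ ::= Bool | τ1 × τ2`. -/
inductive Ty : Type
  | bool : Ty
  | prod : Ty → Ty → Ty
deriving DecidableEq

/-- Dice values: `v ::= true | false | (v, v)`. -/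
inductive Val : Type
  | bool : Bool → Val
  | pair : Val → Val → Val
deriving DecidableEq

/-- Typing of values. -/
def Val.hasTy : Val → Ty → Bool
  | .bool _, .bool => true
  | .pair v1 v2, .prod τ1 τ2 => v1.hasTy τ1 && v2.hasTy τ2
  | _, _ => false

/-- The (finitely many) values of a given type. -/
def Ty.vals : Ty → List Val
  | .bool => [.bool false, .bool true]
  | .prod τ1 τ2 => τ1.vals.flatMap (fun v1 => τ2.vals.map (fun v2 => .pair v1 v2))

/-- Atomic expressions: variables and values. -/
inductive AExp : Type
  | var : String → AExp
  | val : Val → AExp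

/-- Dice expressions:
`e ::= a | fst a | snd a | (a, a) | let x:τ = e in e | flip θ
     | if a then e else e | observe a | f(a)`. -/
inductive Exp : Type
  | atom : AExp → Exp
  | fst : AExp → Exp
  | snd : AExp → Exp
  | pair : AExp → AExp → Exp
  | letin : String → Ty → Exp → Exp → Exp
  | flip : ℝ → Exp
  | ite : AExp → Exp → Exp → Exp
  | obs : AExp → Exp
  | call : String → AExp → Exp

/-- Substitution of values for free variables in an atomic expression. -/
def AExp.substEnv (ρ : String → Option Val) : AExp → AExp
  | .val v => .val v
  | .var x => match ρ x with
      | some v => .val v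
      | none => .var x

/-- Capture-avoiding substitution of values for free variables: `e[xi ↦ vi]`
for the substitution described by `ρ`. -/
def Exp.substEnv (ρ : String → Option Val) : Exp → Exp
  | .atom a => .atom (a.substEnv ρ)
  | .fst a => .fst (a.substEnv ρ)
  | .snd a => .snd (a.substEnv ρ)
  | .pair a1 a2 => .pair (a1.substEnv ρ) (a2.substEnv ρ)
  | .letin x τ e1 e2 =>
      .letin x τ (e1.substEnv ρ) (e2.substEnv (fun y => if y = x then none else ρ y))
  | .flip θ => .flip θ
  | .ite a e1 e2 => .ite (a.substEnv ρ) (e1.substEnv ρ) (e2.substEnv ρ)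
  | .obs a => .obs (a.substEnv ρ)
  | .call f a => .call f (a.substEnv ρ)

/-- Size of an expression (used for termination of the semantics). -/
def Exp.size : Exp → ℕ
  | .atom _ => 1
  | .fst _ => 1
  | .snd _ => 1
  | .pair _ _ => 1
  | .letin _ _ e1 e2 => e1.size + e2.size + 1
  | .flip _ => 1
  | .ite _ e1 e2 => e1.size + e2.size + 1
  | .obs _ => 1
  | .call _ _ => 1

theorem Exp.size_substEnv (ρ : String → Option Val) (e : Exp) :
    (e.substEnv ρ).size = e.size := by
  induction e generalizing ρ <;> simp [Exp.substEnv, Exp.size, *]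

/-- The unnormalized denotational semantics `⟦e⟧ : Val → ℝ` of a (closed) Dice
expression:
* `⟦v1⟧(v) = 1` if `v = v1` else `0`;
* `⟦fst (v1,v2)⟧(v) = 1` if `v = v1` else `0`, similarly for `snd`;
* `⟦flip θ⟧(true) = θ`, `⟦flip θ⟧(false) = 1 − θ`, `0` on other values;
* `⟦if true then e1 else e2⟧ = ⟦e1⟧`, `⟦if false then e1 else e2⟧ = ⟦e2⟧`;
* `⟦observe v1⟧(v) = 1` if `v1 = true` and `v = true`, else `0`;
* `⟦let x = e1 in e2⟧(v) = Σ_{v'} ⟦e1⟧(v') · ⟦e2[x ↦ v']⟧(v)`, summing over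
  the values `v'` of the annotated type of the bound variable;
* `⟦f(v1)⟧(v) = T(f)(v1)(v)` where `T` is the ambient function table mapping
  function names to conditional distributions.
(Expressions that still contain free variables in evaluation position get the
always-zero semantics, for totality.) -/
noncomputable def Exp.sem (T : String → Val → Val → ℝ) : Exp → Val → ℝ
  | .atom (.val v1), v => if v = v1 then 1 else 0
  | .atom (.var _), _ => 0
  | .fst (.val (.pair v1 _)), v => if v = v1 then 1 else 0
  | .fst _, _ => 0
  | .snd (.val (.pair _ v2)), v => if v = v2 then 1 else 0
  | .snd _, _ => 0
  | .pair (.val v1) (.val v2), v => if v = .pair v1 v2 then 1 else 0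
  | .pair _ _, _ => 0
  | .flip θ, .bool b => if b then θ else 1 - θ
  | .flip _, _ => 0
  | .ite (.val (.bool true)) e1 _, v => e1.sem T v
  | .ite (.val (.bool false)) _ e2, v => e2.sem T v
  | .ite _ _ _, _ => 0
  | .obs (.val (.bool true)), v => if v = .bool true then 1 else 0
  | .obs _, _ => 0
  | .call f (.val v1), v => T f v1 v
  | .call _ (.var _), _ => 0
  | .letin x τ1 e1 e2, v =>
      (τ1.vals.map (fun v' =>
        e1.sem T v' * (e2.substEnv (fun y => if y = x then some v' else none)).sem T v)).sum
termination_by e _ => e.size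
decreasing_by all_goals · simp [Exp.size, Exp.size_substEnv] <;> omega

/-- Propositional formulas over flip variables (numbered by `ℕ`) and program
variables (a program-variable name together with a path of left/right
projections; `false` = left, `true` = right).  The derived names `x_l` and
`x_r` used by the form function are modeled by extending the path. -/
inductive Form : Type
  | tt : Form
  | ff : Form
  | fvar : ℕ → Form
  | pvar : String → List Bool → Form
  | not : Form → Form
  | and : Form → Form → Form
  | or : Form → Form → Form
  | iff : Form → Form → Form

/-- Evaluation of a formula under truth assignments for flip and program
variables. -/
def Form.eval (σ : ℕ → Bool) (ρ : String → List Bool → Bool) : Form → Bool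
  | .tt => true
  | .ff => false
  | .fvar i => σ i
  | .pvar x p => ρ x p
  | .not φ => !(φ.eval σ ρ)
  | .and φ ψ => φ.eval σ ρ && ψ.eval σ ρ
  | .or φ ψ => φ.eval σ ρ || ψ.eval σ ρ
  | .iff φ ψ => φ.eval σ ρ == ψ.eval σ ρ

/-- Tuples of Boolean formulas, shaped like a Dice type. -/
inductive TForm : Type
  | base : Form → TForm
  | pair : TForm → TForm → TForm

/-- The form function: `form_Bool(x) = x` and
`form_{τ1×τ2}(x) = (form_{τ1}(x_l), form_{τ2}(x_r))`, derived names being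
modeled by extending the projection path. -/
def formVar (x : String) : Ty → List Bool → TForm
  | .bool, p => .base (.pvar x p)
  | .prod τ1 τ2, p =>
      .pair (formVar x τ1 (p ++ [false])) (formVar x τ2 (p ++ [true]))

/-- A value interpreted as a (tuple of) constant Boolean formula(s). -/
def Val.toForm : Val → TForm
  | .bool b => .base (if b then .tt else .ff)
  | .pair v1 v2 => .pair v1.toForm v2.toForm

/-- Pointwise iff `φ̂1 ⇔τ φ̂2` (shape mismatch yields the false formula). -/
def TForm.tiff : TForm → TForm → Form
  | .base φ, .base ψ => .iff φ ψ
  | .pair a b, .pair c d => .and (a.tiff c) (b.tiff d)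
  | _, _ => .ff

/-- Broadcasted conjunction `φ ∧τ φ̂`. -/
def TForm.band : TForm → Form → TForm
  | .base ψ, φ => .base (.and φ ψ)
  | .pair a b, φ => .pair (a.band φ) (b.band φ)

/-- Pointwise disjunction `φ̂1 ∨τ φ̂2` (shape mismatch yields the left input). -/
def TForm.tor : TForm → TForm → TForm
  | .base a, .base b => .base (.or a b)
  | .pair a b, .pair c d => .pair (a.tor c) (b.tor d)
  | t, _ => t

/-- The component of a tuple of formulas at a given projection path. -/
def TForm.lookup : TForm → List Bool → Option Form
  | .base φ, [] => some φ
  | .pair a _, false :: p => a.lookup p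
  | .pair _ b, true :: p => b.lookup p
  | _, _ => none

/-- Typed substitution `φ[x ↦τ φ̂]` on a single formula: every program
variable `(x, p)` derived from `x` is replaced by the component of the tuple
`φ̂` at path `p` (this is exactly the effect of the sequential substitutions
`φ[x_l ↦τa φ̂a][x_r ↦τb φ̂b]` of the recursive definition). -/
def Form.tsubst : Form → String → TForm → Form
  | .tt, _, _ => .tt
  | .ff, _, _ => .ff
  | .fvar i, _, _ => .fvar i
  | .pvar y p, x, t =>
      if y = x then (t.lookup p).getD (.pvar y p) else .pvar y p
  | .not φ, x, t => .not (φ.tsubst x t)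
  | .and φ ψ, x, t => .and (φ.tsubst x t) (ψ.tsubst x t)
  | .or φ ψ, x, t => .or (φ.tsubst x t) (ψ.tsubst x t)
  | .iff φ ψ, x, t => .iff (φ.tsubst x t) (ψ.tsubst x t)

/-- Typed substitution on a tuple of formulas (componentwise). -/
def TForm.tsubst : TForm → String → TForm → TForm
  | .base φ, x, t => .base (φ.tsubst x t)
  | .pair a b, x, t => .pair (a.tsubst x t) (b.tsubst x t)

/-- Renaming the flip variables of a formula to fresh ones by shifting them by
`k` (used to model `RefreshFlips`). -/
def Form.shift (k : ℕ) : Form → Form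
  | .tt => .tt
  | .ff => .ff
  | .fvar i => .fvar (i + k)
  | .pvar x p => .pvar x p
  | .not φ => .not (φ.shift k)
  | .and φ ψ => .and (φ.shift k) (ψ.shift k)
  | .or φ ψ => .or (φ.shift k) (ψ.shift k)
  | .iff φ ψ => .iff (φ.shift k) (ψ.shift k)

/-- Flip-variable renaming on tuples of formulas (componentwise). -/
def TForm.shift (k : ℕ) : TForm → TForm
  | .base φ => .base (φ.shift k)
  | .pair a b => .pair (a.shift k) (b.shift k)

/-- Substitution `[xi ↦τi vi]` of values for all program variables of a
formula: each variable `(x, p)` is replaced by the constant component of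
`(ρ x)` at path `p`. -/
def Form.substProg (ρ : String → Val) : Form → Form
  | .tt => .tt
  | .ff => .ff
  | .fvar i => .fvar i
  | .pvar x p => ((Val.toForm (ρ x)).lookup p).getD .ff
  | .not φ => .not (φ.substProg ρ)
  | .and φ ψ => .and (φ.substProg ρ) (ψ.substProg ρ)
  | .or φ ψ => .or (φ.substProg ρ) (ψ.substProg ρ)
  | .iff φ ψ => .iff (φ.substProg ρ) (ψ.substProg ρ)

/-- Compilation of an atomic expression at a type: a variable compiles to its
form, a value to the corresponding tuple of constants. -/
def AExp.compT (Γ : String → Option Ty) : AExp → Ty → Option TForm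
  | .var x, τ => if Γ x = some τ then some (formVar x τ []) else none
  | .val v, τ => if v.hasTy τ then some v.toForm else none

/-- The compiled form of a function `fun f(x:τ1):τ2 { e }`: the formal
argument name, the argument and return types, the compiled tuple of formulas
and accepting formula of the body (over its own local flip variables
`0, …, nflips−1`), and its local weight function. -/
structure FInfo : Type where
  arg : String
  argTy : Ty
  retTy : Ty
  tf : TForm
  gf : Form
  nflips : ℕ
  wf : ℕ → Bool → ℝ

/-- The typed compilation judgment `Γ, Φ ⊢ e : τ ⤳ (φ̂, γ, w)`, producing a tuple
of Boolean formulas `φ̂` shaped like `τ`, an accepting formula `γ`, and a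
weight function `w`.  Freshness of flip variables is modeled by threading a
counter: `TComp Γ e τ n m φ̂ γ w` means `e` compiles using the fresh flip
variables `n, …, m−1`; the weight function is a single global function
constrained at each flip variable (the union of weight functions with disjoint
domains).  `Φ` maps function names to their compiled forms; rule `call`
implements `C-FuncCall`: the stored formulas have their flip variables
replaced by fresh ones (`RefreshFlips`, modeled by shifting into the fresh
range `n, …, n+k−1`) and the actual argument is substituted for the formal
argument. -/
inductive TComp :
    (String → Option Ty) → (String → Option FInfo) →
    Exp → Ty → ℕ → ℕ → TForm → Form → (ℕ → Bool → ℝ) → Prop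
  | atom (Γ : String → Option Ty) (Φ : String → Option FInfo) (a : AExp) (τ : Ty) (t : TForm) (n : ℕ)
      (w : ℕ → Bool → ℝ) (h : a.compT Γ τ = some t) :
      TComp Γ Φ (.atom a) τ n n t .tt w
  | fst (Γ : String → Option Ty) (Φ : String → Option FInfo) (a : AExp) (τ1 τ2 : Ty) (t1 t2 : TForm) (n : ℕ)
      (w : ℕ → Bool → ℝ) (h : a.compT Γ (.prod τ1 τ2) = some (.pair t1 t2)) :
      TComp Γ Φ (.fst a) τ1 n n t1 .tt w
  | snd (Γ : String → Option Ty) (Φ : String → Option FInfo) (a : AExp) (τ1 τ2 : Ty) (t1 t2 : TForm) (n : ℕ)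
      (w : ℕ → Bool → ℝ) (h : a.compT Γ (.prod τ1 τ2) = some (.pair t1 t2)) :
      TComp Γ Φ (.snd a) τ2 n n t2 .tt w
  | pair (Γ : String → Option Ty) (Φ : String → Option FInfo) (a1 a2 : AExp) (τ1 τ2 : Ty) (t1 t2 : TForm)
      (n : ℕ) (w : ℕ → Bool → ℝ)
      (h1 : a1.compT Γ τ1 = some t1) (h2 : a2.compT Γ τ2 = some t2) :
      TComp Γ Φ (.pair a1 a2) (.prod τ1 τ2) n n (.pair t1 t2) .tt w
  | flip (Γ : String → Option Ty) (Φ : String → Option FInfo) (θ : ℝ) (n : ℕ) (w : ℕ → Bool → ℝ)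
      (h0 : 0 ≤ θ) (h1 : θ ≤ 1) (hwt : w n true = θ) (hwf : w n false = 1 - θ) :
      TComp Γ Φ (.flip θ) .bool n (n + 1) (.base (.fvar n)) .tt w
  | obs (Γ : String → Option Ty) (Φ : String → Option FInfo) (a : AExp) (φa : Form) (n : ℕ)
      (w : ℕ → Bool → ℝ) (h : a.compT Γ .bool = some (.base φa)) :
      TComp Γ Φ (.obs a) .bool n n (.base .tt) φa w
  | ite (Γ : String → Option Ty) (Φ : String → Option FInfo) (a : AExp) (eT eE : Exp) (τ : Ty)
      (φg : Form) (tT tE : TForm) (γT γE : Form) (n m k : ℕ) (w : ℕ → Bool → ℝ)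
      (hg : a.compT Γ .bool = some (.base φg))
      (hT : TComp Γ Φ eT τ n m tT γT w) (hE : TComp Γ Φ eE τ m k tE γE w) :
      TComp Γ Φ (.ite a eT eE) τ n k
        ((tT.band φg).tor (tE.band (.not φg)))
        (.or (.and φg γT) (.and (.not φg) γE)) w
  | letin (Γ : String → Option Ty) (Φ : String → Option FInfo) (x : String) (τ1 τ2 : Ty) (e1 e2 : Exp)
      (t1 t2 : TForm) (γ1 γ2 : Form) (n m k : ℕ) (w : ℕ → Bool → ℝ)
      (h1 : TComp Γ Φ e1 τ1 n m t1 γ1 w)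
      (h2 : TComp (fun y => if y = x then some τ1 else Γ y) Φ e2 τ2 m k t2 γ2 w) :
      TComp Γ Φ (.letin x τ1 e1 e2) τ2 n k
        (t2.tsubst x t1) (.and γ1 (γ2.tsubst x t1)) w
  | call (Γ : String → Option Ty) (Φ : String → Option FInfo) (f : String)
      (a : AExp) (fi : FInfo) (ta : TForm) (n : ℕ) (w : ℕ → Bool → ℝ)
      (hf : Φ f = some fi)
      (ha : a.compT Γ fi.argTy = some ta)
      (hw : ∀ i < fi.nflips, ∀ b, w (n + i) b = fi.wf i b) :
      TComp Γ Φ (.call f a) fi.retTy n (n + fi.nflips)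
        ((fi.tf.shift n).tsubst fi.arg ta)
        ((fi.gf.shift n).tsubst fi.arg ta) w

/-- The weighted model count of a formula over the flip variables `0, …, n−1`:
`WMC(φ, w) = Σ_{ω ⊨ φ} Π_{l ∈ ω} w(l)`.  (Program variables, which do not
occur after substitution, are evaluated as `false`.) -/
noncomputable def WMC (n : ℕ) (φ : Form) (w : ℕ → Bool → ℝ) : ℝ :=
  ∑ σ : Fin n → Bool,
    if φ.eval (fun i => if h : i < n then σ ⟨i, h⟩ else false) (fun _ _ => false)
    then ∏ i : Fin n, w i (σ i) else 0

/-- Dice programs: a sequence of non-recursive function definitions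
`fun f(x:τ1):τ2 { e }` followed by a main expression. -/
inductive Prog : Type
  | main : Exp → Prog
  | fdef : String → String → Ty → Ty → Exp → Prog → Prog

/-- The unnormalized semantics of a program relative to a function table `T`:
`⟦• e⟧^T = ⟦e⟧^T` and `⟦func p⟧^T = ⟦p⟧^{T ∪ {name(func) ↦ ⟦func⟧^T}}`,
where `⟦fun f(x:τ1):τ2 { e }⟧(v) = ⟦e[x ↦ v]⟧`. -/
noncomputable def Prog.sem : (String → Val → Val → ℝ) → Prog → Val → ℝ
  | T, .main e => e.sem T
  | T, .fdef f x _ _ body rest =>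
      rest.sem (fun g =>
        if g = f then
          fun varg =>
            (body.substEnv (fun y => if y = x then some varg else none)).sem T
        else T g)

/-- The compilation judgment for programs `Γ, Φ ⊢ p : τ ⤳ (φ̂, γ, w)` (rules
`C-Prog1`, `C-Prog2`, `C-Func`): each function is compiled in order (its body
compiled with the formal argument in scope, over its own local flip variables)
and added to the compiled-function context `Φ`, and finally the closed main
expression is compiled. -/
inductive PComp :
    (String → Option FInfo) → Prog → Ty → TForm → Form → ℕ → (ℕ → Bool → ℝ) → Prop
  | main (Φ : String → Option FInfo) (e : Exp) (τ : Ty) (t : TForm) (γ : Form)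
      (n : ℕ) (w : ℕ → Bool → ℝ)
      (h : TComp (fun _ => none) Φ e τ 0 n t γ w) :
      PComp Φ (.main e) τ t γ n w
  | fdef (Φ : String → Option FInfo) (f x : String) (τ1 τ2 : Ty) (body : Exp)
      (rest : Prog) (τ : Ty) (t : TForm) (γ : Form) (n : ℕ) (w : ℕ → Bool → ℝ)
      (k : ℕ) (tf : TForm) (gf : Form) (wf : ℕ → Bool → ℝ)
      (hbody : TComp (fun y => if y = x then some τ1 else none) Φ body τ2 0 k tf gf wf)
      (hrest : PComp
        (fun g => if g = f then some ⟨x, τ1, τ2, tf, gf, k, wf⟩ else Φ g)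
        rest τ t γ n w) :
      PComp Φ (.fdef f x τ1 τ2 body rest) τ t γ n w

/-!
Instead of substituting values into formulas, we evaluate them under an assignment `σ` of the
flip variables together with an environment for the program variables. By induction on the
compilation derivation, a compiled expression whose flips are `n, …, m-1` then denotes, under any
well-typed substitution `ρ` of its free variables, the `w`-weighted sum over the assignments of
those flips of the indicator that `φ̂` evaluates to `v` and `γ` holds. The flips of the two
subterms of `let` and `if` form disjoint blocks, so the weighted sum over their union factors,
and summing out a block that the indicator ignores contributes a factor one. For `let`, the
typed substitution `φ[x ↦ φ̂₁]` evaluates like `φ` with `x` bound to the value of `φ̂₁`, onto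
which the sum over the value of `x` collapses; a call reindexes the flips of the callee into its
fresh block. Function definitions extend the table with entries satisfying this invariant, and
for the closed main expression the weighted sum is the weighted model count.
-/

def Ty.IsPath : Ty → List Bool → Prop
  | .bool, [] => True
  | .prod τ _, false :: p => τ.IsPath p
  | .prod _ τ, true :: p => τ.IsPath p
  | _, _ => False

def Val.leaf : Val → List Bool → Bool
  | .bool b, [] => b
  | .pair v _, false :: p => v.leaf p
  | .pair _ v, true :: p => v.leaf p
  | _, _ => false

theorem Val.mem_vals_iff {τ : Ty} {v : Val} : v ∈ τ.vals ↔ v.hasTy τ := by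
  induction τ generalizing v with
  | bool => cases v <;> simp [Ty.vals, Val.hasTy]
  | prod τ1 τ2 ih1 ih2 => cases v <;> simp [Ty.vals, Val.hasTy, ih1, ih2]

theorem Ty.nodup_vals (τ : Ty) : τ.vals.Nodup := by
  induction τ with
  | bool => simp [Ty.vals]
  | prod τ1 τ2 ih1 ih2 =>
    refine List.nodup_flatMap.2 ⟨fun v _ => ih2.map fun _ _ h => by injection h, ?_⟩
    refine ih1.imp fun hne => List.disjoint_left.2 ?_
    simp only [List.mem_map]
    rintro _ ⟨_, _, rfl⟩ ⟨_, _, h⟩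
    injection h with h
    exact hne h.symm

def Form.VarsIn (s : Set ℕ) (P : String → List Bool → Prop) : Form → Prop
  | .tt => True
  | .ff => True
  | .fvar i => i ∈ s
  | .pvar x p => P x p
  | .not φ => φ.VarsIn s P
  | .and φ ψ => φ.VarsIn s P ∧ ψ.VarsIn s P
  | .or φ ψ => φ.VarsIn s P ∧ ψ.VarsIn s P
  | .iff φ ψ => φ.VarsIn s P ∧ ψ.VarsIn s P

section Formulas

variable {φ : Form} {s s' : Set ℕ} {P : String → List Bool → Prop}
  {σ σ' : ℕ → Bool} {r r' : String → List Bool → Bool}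

theorem Form.VarsIn.mono (h : φ.VarsIn s P) (hs : s ⊆ s') : φ.VarsIn s' P := by
  induction φ <;> simp_all [Form.VarsIn, Set.subset_def]

theorem Form.eval_congr_of_varsIn (h : φ.VarsIn s P) (hσ : ∀ i ∈ s, σ i = σ' i)
    (hr : ∀ x p, P x p → r x p = r' x p) : φ.eval σ r = φ.eval σ' r' := by
  induction φ <;> simp_all [Form.VarsIn, Form.eval]

theorem Form.eval_shift (k : ℕ) : (φ.shift k).eval σ r = φ.eval (fun i => σ (i + k)) r := by
  induction φ <;> simp_all [Form.shift, Form.eval]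

theorem Form.VarsIn.shift {k : ℕ} (h : φ.VarsIn s P) (hs : ∀ i ∈ s, i + k ∈ s') :
    (φ.shift k).VarsIn s' P := by
  induction φ <;> simp_all [Form.shift, Form.VarsIn]

theorem Form.eval_tsubst (x : String) (t : TForm) :
    (φ.tsubst x t).eval σ r = φ.eval σ (fun y p =>
      if y = x then ((t.lookup p).map (·.eval σ r)).getD (r y p) else r y p) := by
  induction φ with
  | pvar y p =>
    by_cases hy : y = x
    · cases h : t.lookup p <;> simp [Form.tsubst, Form.eval, hy, h]
    · simp [Form.tsubst, Form.eval, hy]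
  | _ => simp_all [Form.tsubst, Form.eval]

end Formulas

def TForm.shape : TForm → Ty
  | .base _ => .bool
  | .pair a b => .prod a.shape b.shape

def TForm.eval (σ : ℕ → Bool) (r : String → List Bool → Bool) : TForm → Val
  | .base φ => .bool (φ.eval σ r)
  | .pair a b => .pair (a.eval σ r) (b.eval σ r)

def TForm.Forall (P : Form → Prop) : TForm → Prop
  | .base φ => P φ
  | .pair a b => a.Forall P ∧ b.Forall P

def TForm.map (f : Form → Form) : TForm → TForm
  | .base φ => .base (f φ)
  | .pair a b => .pair (a.map f) (b.map f)

def Scoped (Γ : String → Option Ty) (x : String) (p : List Bool) : Prop :=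
  ∃ τ, Γ x = some τ ∧ τ.IsPath p

section TupleFormulas

variable {t t' : TForm} {φ ψ : Form} {p : List Bool} {s : Set ℕ}
  {P Q : Form → Prop} {σ σ' : ℕ → Bool} {r r' : String → List Bool → Bool}

theorem TForm.shift_eq_map (k : ℕ) : t.shift k = t.map (Form.shift k) := by
  induction t <;> simp_all [TForm.shift, TForm.map]

theorem TForm.tsubst_eq_map (x : String) : t.tsubst x t' = t.map (Form.tsubst · x t') := by
  induction t <;> simp_all [TForm.tsubst, TForm.map]

theorem TForm.band_eq_map : t.band φ = t.map (Form.and φ) := by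
  induction t <;> simp_all [TForm.band, TForm.map]

@[simp]
theorem TForm.shape_map (f : Form → Form) : (t.map f).shape = t.shape := by
  induction t <;> simp_all [TForm.map, TForm.shape]

@[simp]
theorem TForm.map_map (f g : Form → Form) : (t.map f).map g = t.map (g ∘ f) := by
  induction t <;> simp_all [TForm.map]

theorem TForm.forall_map {f : Form → Form} :
    (t.map f).Forall P ↔ t.Forall (fun φ => P (f φ)) := by
  induction t <;> simp_all [TForm.map, TForm.Forall]

theorem TForm.Forall.imp (h : t.Forall P) (hPQ : ∀ φ, P φ → Q φ) : t.Forall Q := by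
  induction t <;> simp_all [TForm.Forall]

theorem TForm.Forall.of_lookup (h : t.Forall P) (hp : t.lookup p = some ψ) : P ψ := by
  induction t generalizing p with
  | base φ => cases p <;> simp_all [TForm.lookup, TForm.Forall]
  | pair a b iha ihb =>
    rcases p with _ | ⟨_ | _, p⟩
    · simp [TForm.lookup] at hp
    · exact iha h.1 hp
    · exact ihb h.2 hp

theorem TForm.eval_map {f : Form → Form}
    (h : t.Forall fun φ => (f φ).eval σ r = φ.eval σ' r') :
    (t.map f).eval σ r = t.eval σ' r' := by
  induction t <;> simp_all [TForm.map, TForm.eval, TForm.Forall]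

theorem TForm.eval_congr_of_varsIn {P : String → List Bool → Prop}
    (h : t.Forall (·.VarsIn s P)) (hσ : ∀ i ∈ s, σ i = σ' i)
    (hr : ∀ x p, P x p → r x p = r' x p) :
    t.eval σ r = t.eval σ' r' := by
  induction t <;> simp_all [TForm.eval, TForm.Forall, Form.eval_congr_of_varsIn _ hσ hr]

theorem TForm.hasTy_eval : (t.eval σ r).hasTy t.shape := by
  induction t <;> simp_all [TForm.eval, TForm.shape, Val.hasTy]

theorem TForm.exists_lookup (h : t.shape.IsPath p) : ∃ ψ, t.lookup p = some ψ := by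
  induction t generalizing p with
  | base φ => cases p <;> simp_all [TForm.lookup, TForm.shape, Ty.IsPath]
  | pair a b iha ihb =>
    rcases p with _ | ⟨_ | _, p⟩ <;> simp_all [TForm.lookup, TForm.shape, Ty.IsPath]

theorem TForm.leaf_eval (hp : t.lookup p = some ψ) : (t.eval σ r).leaf p = ψ.eval σ r := by
  induction t generalizing p with
  | base φ => cases p <;> simp_all [TForm.lookup, TForm.eval, Val.leaf]
  | pair a b iha ihb =>
    rcases p with _ | ⟨_ | _, p⟩ <;> simp_all [TForm.lookup, TForm.eval, Val.leaf]

@[simp]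
theorem TForm.shape_tor : (t.tor t').shape = t.shape := by
  induction t generalizing t' <;> cases t' <;> simp_all [TForm.tor, TForm.shape]

theorem TForm.Forall.tor {P : String → List Bool → Prop} (h : t.Forall (·.VarsIn s P))
    (h' : t'.Forall (·.VarsIn s P)) : (t.tor t').Forall (·.VarsIn s P) := by
  induction t generalizing t' <;> cases t' <;> simp_all [TForm.tor, TForm.Forall, Form.VarsIn]

theorem TForm.eval_tor_band_not (h : t.shape = t'.shape) :
    ((t.band φ).tor (t'.band (.not φ))).eval σ r =
      if φ.eval σ r then t.eval σ r else t'.eval σ r := by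
  induction t generalizing t' with
  | base α => cases t' <;> cases hφ : φ.eval σ r <;>
      simp_all [TForm.band, TForm.tor, TForm.eval, TForm.shape, Form.eval]
  | pair a b iha ihb =>
    cases t' with
    | base β => simp [TForm.shape] at h
    | pair c d =>
      simp only [TForm.shape, Ty.prod.injEq] at h
      simp only [TForm.band, TForm.tor, TForm.eval, iha h.1, ihb h.2]
      split <;> rfl

theorem Form.eval_tiff_toForm (v : Val) :
    (t.tiff v.toForm).eval σ r = decide (t.eval σ r = v) := by
  induction t generalizing v with
  | base φ =>
    rcases v with (_ | _) | _ <;> cases φ.eval σ r <;>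
      simp_all [Val.toForm, TForm.tiff, TForm.eval, Form.eval]
  | pair a b iha ihb => cases v <;> simp_all [Val.toForm, TForm.tiff, TForm.eval, Form.eval]

end TupleFormulas

section Substitution

variable {φ : Form} {s : Set ℕ} {Γ Γ' : String → Option Ty} {x : String} {t : TForm}

theorem Form.VarsIn.tsubst (hφ : φ.VarsIn s (Scoped Γ'))
    (ht : t.Forall (·.VarsIn s (Scoped Γ))) (hx : Γ' x = some t.shape)
    (hΓ : ∀ y ≠ x, ∀ τ, Γ' y = some τ → Γ y = some τ) :
    (φ.tsubst x t).VarsIn s (Scoped Γ) := by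
  induction φ with
  | pvar y p =>
    obtain ⟨τ, hy, hp⟩ := hφ
    by_cases hyx : y = x
    · subst hyx
      obtain rfl : τ = t.shape := Option.some.inj (hy.symm.trans hx)
      obtain ⟨ψ, hψ⟩ := TForm.exists_lookup hp
      simpa [Form.tsubst, hψ] using ht.of_lookup hψ
    · simpa [Form.tsubst, hyx] using ⟨τ, hΓ y hyx τ hy, hp⟩
  | _ => simp_all [Form.tsubst, Form.VarsIn]

theorem Form.eval_tsubst_of_varsIn {σ : ℕ → Bool} {r r' : String → List Bool → Bool}
    (hφ : φ.VarsIn s (Scoped Γ)) (hx : Γ x = some t.shape)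
    (hr : ∀ y p, y ≠ x → Scoped Γ y p → r' y p = r y p)
    (hrx : ∀ p, r' x p = (t.eval σ r).leaf p) :
    (φ.tsubst x t).eval σ r = φ.eval σ r' := by
  rw [Form.eval_tsubst]
  refine Form.eval_congr_of_varsIn hφ (fun _ _ => rfl) fun y p hyp => ?_
  by_cases hyx : y = x
  · subst hyx
    obtain ⟨τ, hy, hp⟩ := hyp
    obtain rfl : τ = t.shape := Option.some.inj (hy.symm.trans hx)
    obtain ⟨ψ, hψ⟩ := TForm.exists_lookup hp
    simp [hψ, hrx, TForm.leaf_eval hψ]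
  · simp [hyx, hr y p hyx hyp]

end Substitution

section Atoms

variable {s : Set ℕ} {P : String → List Bool → Prop} {σ : ℕ → Bool}
  {r : String → List Bool → Bool}

theorem Val.shape_toForm {v : Val} {τ : Ty} (h : v.hasTy τ) : v.toForm.shape = τ := by
  induction v generalizing τ with
  | bool b => cases τ <;> simp_all [Val.hasTy, Val.toForm, TForm.shape]
  | pair a b iha ihb =>
    cases τ <;> simp only [Val.hasTy, Bool.and_eq_true, Bool.false_eq_true] at h
    simp [Val.toForm, TForm.shape, iha h.1, ihb h.2]

theorem Val.eval_toForm (v : Val) : v.toForm.eval σ r = v := by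
  induction v with
  | bool b => cases b <;> rfl
  | pair a b iha ihb => simp [Val.toForm, TForm.eval, iha, ihb]

theorem Val.forall_varsIn_toForm (v : Val) : v.toForm.Forall (·.VarsIn s P) := by
  induction v with
  | bool b => cases b <;> trivial
  | pair a b iha ihb => exact ⟨iha, ihb⟩

theorem shape_formVar (x : String) (τ : Ty) (p : List Bool) : (formVar x τ p).shape = τ := by
  induction τ generalizing p <;> simp_all [formVar, TForm.shape]

theorem eval_formVar {x : String} {τ : Ty} {p : List Bool} {u : Val} (hu : u.hasTy τ)
    (hr : ∀ q, r x (p ++ q) = u.leaf q) : (formVar x τ p).eval σ r = u := by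
  induction τ generalizing p u with
  | bool =>
    rcases u with b | _
    · simpa [formVar, TForm.eval, Form.eval, Val.leaf] using hr []
    · simp [Val.hasTy] at hu
  | prod τ1 τ2 ih1 ih2 =>
    rcases u with _ | ⟨u1, u2⟩
    · simp [Val.hasTy] at hu
    simp only [Val.hasTy, Bool.and_eq_true] at hu
    simp only [formVar, TForm.eval]
    rw [ih1 hu.1 fun q => by simpa [Val.leaf] using hr (false :: q),
      ih2 hu.2 fun q => by simpa [Val.leaf] using hr (true :: q)]

theorem forall_varsIn_formVar {x : String} {τ : Ty} {p : List Bool}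
    (h : ∀ q, τ.IsPath q → P x (p ++ q)) : (formVar x τ p).Forall (·.VarsIn s P) := by
  induction τ generalizing p with
  | bool => simpa [formVar, TForm.Forall, Form.VarsIn] using h [] trivial
  | prod τ1 τ2 ih1 ih2 =>
    exact ⟨ih1 fun q hq => by simpa using h (false :: q) hq,
      ih2 fun q hq => by simpa using h (true :: q) hq⟩

def progEnv (ρ : String → Option Val) : String → List Bool → Bool :=
  fun x p => (ρ x).elim false (Val.leaf · p)

def EnvHasTy (ρ : String → Option Val) (Γ : String → Option Ty) : Prop :=
  ∀ x τ, Γ x = some τ → ∃ u, ρ x = some u ∧ u.hasTy τ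

variable {Γ : String → Option Ty} {a : AExp} {τ : Ty} {t : TForm}

theorem AExp.compT_wf (h : a.compT Γ τ = some t) :
    t.shape = τ ∧ t.Forall (·.VarsIn s (Scoped Γ)) := by
  cases a with
  | var x =>
    simp only [AExp.compT, Option.ite_none_right_eq_some, Option.some.injEq] at h
    obtain ⟨hx, rfl⟩ := h
    exact ⟨shape_formVar x τ [], forall_varsIn_formVar fun q hq => ⟨τ, hx, hq⟩⟩
  | val v =>
    simp only [AExp.compT, Option.ite_none_right_eq_some, Option.some.injEq] at h
    obtain ⟨hv, rfl⟩ := h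
    exact ⟨Val.shape_toForm hv, Val.forall_varsIn_toForm v⟩

theorem AExp.compT_eval {ρ : String → Option Val} (h : a.compT Γ τ = some t)
    (hρ : EnvHasTy ρ Γ) :
    ∃ u, a.substEnv ρ = .val u ∧ u.hasTy τ ∧ ∀ σ, t.eval σ (progEnv ρ) = u := by
  cases a with
  | var x =>
    simp only [AExp.compT, Option.ite_none_right_eq_some, Option.some.injEq] at h
    obtain ⟨hx, rfl⟩ := h
    obtain ⟨u, hρx, hu⟩ := hρ x τ hx
    exact ⟨u, by simp [AExp.substEnv, hρx], hu,
      fun σ => eval_formVar hu (by simp [progEnv, hρx])⟩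
  | val v =>
    simp only [AExp.compT, Option.ite_none_right_eq_some, Option.some.injEq] at h
    obtain ⟨hv, rfl⟩ := h
    exact ⟨v, rfl, hv, fun σ => Val.eval_toForm v⟩

end Atoms

theorem AExp.substEnv_none (a : AExp) : a.substEnv (fun _ => none) = a := by
  cases a <;> rfl

theorem Exp.substEnv_none (e : Exp) : e.substEnv (fun _ => none) = e := by
  induction e <;> simp_all [Exp.substEnv, AExp.substEnv_none]

theorem AExp.substEnv_substEnv (ρ₁ ρ₂ : String → Option Val) (a : AExp) :
    (a.substEnv ρ₁).substEnv ρ₂ = a.substEnv (fun y => (ρ₁ y).or (ρ₂ y)) := by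
  cases a with
  | val v => rfl
  | var y => cases h : ρ₁ y <;> simp [AExp.substEnv, h]

theorem Exp.substEnv_substEnv (ρ₁ ρ₂ : String → Option Val) (e : Exp) :
    (e.substEnv ρ₁).substEnv ρ₂ = e.substEnv (fun y => (ρ₁ y).or (ρ₂ y)) := by
  induction e generalizing ρ₁ ρ₂ with
  | letin x τ e1 e2 ih1 ih2 =>
    simp only [Exp.substEnv, ih1, ih2]
    congr 2
    funext y
    split <;> rfl
  | _ => simp_all [Exp.substEnv, AExp.substEnv_substEnv]

/-- An assignment of the flip variables in `s` is identified with the set `A ⊆ s` of those that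
are true; all other variables are false. -/
noncomputable def wsum (s : Finset ℕ) (w : ℕ → Bool → ℝ) (f : (ℕ → Bool) → ℝ) : ℝ :=
  ∑ A ∈ s.powerset, (∏ i ∈ s, w i (decide (i ∈ A))) * f (fun i => decide (i ∈ A))

section WeightedSum

variable {s t : Finset ℕ} {w : ℕ → Bool → ℝ} {f g : (ℕ → Bool) → ℝ}

theorem wsum_empty : wsum ∅ w f = f (fun _ => false) := by
  simp [wsum]

theorem wsum_singleton (i : ℕ) :
    wsum {i} w f = w i false * f (fun _ => false) + w i true * f (fun j => decide (j = i)) := by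
  rw [wsum, show ({i} : Finset ℕ).powerset = {∅, {i}} from rfl,
    Finset.sum_pair (Finset.singleton_ne_empty i).symm]
  simp

theorem wsum_const (hw : ∀ i ∈ s, w i true + w i false = 1) (c : ℝ) :
    wsum s w (fun _ => c) = c := by
  have hsplit : ∀ A ∈ s.powerset, ∏ i ∈ s, w i (decide (i ∈ A)) =
      (∏ i ∈ A, w i true) * ∏ i ∈ s \ A, w i false := fun A hA => by
    rw [← Finset.prod_sdiff (Finset.mem_powerset.1 hA), mul_comm]
    congr 1 <;> refine Finset.prod_congr rfl fun i hi => ?_ <;> simp_all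
  rw [wsum, ← Finset.sum_mul, Finset.sum_congr rfl hsplit, ← Finset.prod_add,
    Finset.prod_eq_one hw, one_mul]

theorem wsum_union_mul (hst : Disjoint s t) (hf : DependsOn f s) (hg : DependsOn g t) :
    wsum (s ∪ t) w (fun σ => f σ * g σ) = wsum s w f * wsum t w g := by
  rw [wsum, wsum, wsum, Finset.sum_mul_sum, ← Finset.sum_product']
  refine Finset.sum_nbij' (fun A => (A ∩ s, A ∩ t)) (fun B => B.1 ∪ B.2) ?_ ?_ ?_ ?_ ?_
  · intro A _
    simp
  · intro B hB
    simp only [Finset.mem_product, Finset.mem_powerset] at hB ⊢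
    exact Finset.union_subset_union hB.1 hB.2
  · intro A hA
    simp only [Finset.mem_powerset] at hA
    simp [← Finset.inter_union_distrib_left, Finset.inter_eq_left.2 hA]
  · intro B hB
    simp only [Finset.mem_product, Finset.mem_powerset] at hB
    ext a <;> simp only [Finset.mem_inter, Finset.mem_union] <;> grind [Finset.disjoint_left]
  · intro A _
    have hfA : f (fun i => decide (i ∈ A)) = f (fun i => decide (i ∈ A ∩ s)) :=
      hf fun i hi => by simp [Finset.mem_coe.1 hi]
    have hgA : g (fun i => decide (i ∈ A)) = g (fun i => decide (i ∈ A ∩ t)) :=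
      hg fun i hi => by simp [Finset.mem_coe.1 hi]
    have hwA : ∀ u : Finset ℕ, ∏ i ∈ u, w i (decide (i ∈ A)) =
        ∏ i ∈ u, w i (decide (i ∈ A ∩ u)) :=
      fun u => Finset.prod_congr rfl fun i hi => by simp [hi]
    rw [Finset.prod_union hst, hfA, hgA, hwA s, hwA t]
    ring

theorem wsum_union_of_dependsOn (hst : Disjoint s t) (hf : DependsOn f s)
    (hw : ∀ i ∈ t, w i true + w i false = 1) : wsum (s ∪ t) w f = wsum s w f := by
  have h := wsum_union_mul (w := w) hst hf ((dependsOn_const (1 : ℝ)).mono (Set.empty_subset _))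
  simpa [wsum_const hw] using h

theorem wsum_map (e : ℕ ↪ ℕ) (g : (ℕ → Bool) → ℝ) :
    wsum (s.map e) w (fun σ => g (fun i => σ (e i))) = wsum s (fun i => w (e i)) g := by
  have hmem : ∀ (A : Finset ℕ) i, e i ∈ A.image e ↔ i ∈ A := fun A i => by simp
  rw [wsum, wsum, Finset.map_eq_image, Finset.powerset_image,
    Finset.sum_image fun A _ B _ h => Finset.image_injective e.injective h]
  refine Finset.sum_congr rfl fun A _ => ?_
  simp only [Finset.prod_image fun i _ j _ h => e.injective h, hmem]

theorem wsum_congr_weights {w' : ℕ → Bool → ℝ} (hw : ∀ i ∈ s, ∀ b, w i b = w' i b) :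
    wsum s w f = wsum s w' f := by
  unfold wsum
  refine Finset.sum_congr rfl fun A _ => ?_
  rw [Finset.prod_congr rfl fun i hi => hw i hi _]

theorem wsum_list_sum {α : Type*} (l : List α) (F : α → (ℕ → Bool) → ℝ) :
    wsum s w (fun σ => (l.map (F · σ)).sum) = (l.map (wsum s w ∘ F)).sum := by
  induction l with
  | nil => simp [wsum]
  | cons a l ih => simp [← ih, wsum, mul_add, Finset.sum_add_distrib]

theorem WMC_eq_wsum (n : ℕ) (φ : Form) (w : ℕ → Bool → ℝ) :
    WMC n φ w =
      wsum (Finset.range n) w (fun σ => if φ.eval σ (fun _ _ => false) then 1 else 0) := by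
  let extend : (Fin n → Bool) → ℕ → Bool :=
    fun σ i => if h : i < n then σ ⟨i, h⟩ else false
  let support : (Fin n → Bool) → Finset ℕ := fun σ => (Finset.range n).filter (extend σ ·)
  have hext : ∀ σ, extend σ = fun i => decide (i ∈ support σ) := fun σ => by
    funext i
    by_cases h : i < n <;> simp [extend, support, h]
  unfold WMC wsum
  refine Finset.sum_nbij' support (fun A i => decide (i.val ∈ A)) ?_ ?_ ?_ ?_ ?_
  · intro σ _
    simp [support]
  · simp
  · intro σ _
    funext i
    simp [support, extend]
  · intro A hA
    simp only [Finset.mem_powerset] at hA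
    ext i
    simp only [support, extend, Finset.mem_filter, Finset.mem_range]
    constructor
    · rintro ⟨hi, h⟩
      simpa [hi] using h
    · intro h
      have hi := Finset.mem_range.1 (hA h)
      simp [hi, h]
  · intro σ _
    have hprod : ∏ i : Fin n, w i (σ i) = ∏ i ∈ Finset.range n, w i (extend σ i) := by
      rw [← Fin.prod_univ_eq_prod_range (fun i => w i (extend σ i))]
      simp [extend]
    show (if φ.eval (extend σ) _ then _ else 0) = _
    rw [hprod, hext]
    beta_reduce
    split_ifs <;> simp

end WeightedSum

def outcome (t : TForm) (γ : Form) (r : String → List Bool → Bool) (v : Val)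
    (σ : ℕ → Bool) : ℝ :=
  if t.eval σ r = v ∧ γ.eval σ r = true then 1 else 0

theorem outcome_dependsOn {t : TForm} {γ : Form} {s : Set ℕ} {P : String → List Bool → Prop}
    {r : String → List Bool → Bool} {v : Val} (ht : t.Forall (·.VarsIn s P))
    (hγ : γ.VarsIn s P) : DependsOn (outcome t γ r v) s := fun σ σ' h => by
  simp only [outcome, TForm.eval_congr_of_varsIn ht h fun _ _ _ => rfl,
    Form.eval_congr_of_varsIn hγ h fun _ _ _ => rfl]

structure CompiledWF (Γ : String → Option Ty) (τ : Ty) (n m : ℕ) (t : TForm) (γ : Form)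
    (w : ℕ → Bool → ℝ) : Prop where
  le : n ≤ m
  shape : t.shape = τ
  vars_tuple : t.Forall (·.VarsIn (Set.Ico n m) (Scoped Γ))
  vars_accept : γ.VarsIn (Set.Ico n m) (Scoped Γ)
  normalized : ∀ i ∈ Set.Ico n m, w i true + w i false = 1

def FInfo.ctx (fi : FInfo) : String → Option Ty :=
  fun y => if y = fi.arg then some fi.argTy else none

def FInfo.argSubst (fi : FInfo) (u : Val) : String → Option Val :=
  fun y => if y = fi.arg then some u else none

def FInfo.WF (fi : FInfo) : Prop :=
  CompiledWF fi.ctx fi.retTy 0 fi.nflips fi.tf fi.gf fi.wf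

def FInfo.Denotes (fi : FInfo) (F : Val → Val → ℝ) : Prop :=
  ∀ u, u.hasTy fi.argTy → ∀ v,
    F u v = wsum (Finset.Ico 0 fi.nflips) fi.wf (outcome fi.tf fi.gf (progEnv (fi.argSubst u)) v)

section CompiledWF

variable {Γ : String → Option Ty} {w : ℕ → Bool → ℝ} {τ τ1 τ2 : Ty} {n m k : ℕ}
  {t tT tE t1 t2 ta : TForm} {γ γT γE γ1 γ2 φg : Form} {x : String}

theorem CompiledWF.dependsOn (h : CompiledWF Γ τ n m t γ w) (r : String → List Bool → Bool)
    (v : Val) : DependsOn (outcome t γ r v) ↑(Finset.Ico n m) := by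
  rw [Finset.coe_Ico]
  exact outcome_dependsOn h.vars_tuple h.vars_accept

theorem CompiledWF.ite (hg : φg.VarsIn (Set.Ico n k) (Scoped Γ))
    (wT : CompiledWF Γ τ n m tT γT w) (wE : CompiledWF Γ τ m k tE γE w) :
    CompiledWF Γ τ n k ((tT.band φg).tor (tE.band (.not φg)))
      (.or (.and φg γT) (.and (.not φg) γE)) w := by
  have hT : Set.Ico n m ⊆ Set.Ico n k := Set.Ico_subset_Ico le_rfl wE.le
  have hE : Set.Ico m k ⊆ Set.Ico n k := Set.Ico_subset_Ico wT.le le_rfl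
  refine ⟨wT.le.trans wE.le, by simp [TForm.band_eq_map, wT.shape], ?_,
    ⟨⟨hg, wT.vars_accept.mono hT⟩, hg, wE.vars_accept.mono hE⟩, fun i hi => ?_⟩
  · rw [TForm.band_eq_map, TForm.band_eq_map]
    refine TForm.Forall.tor ?_ ?_ <;> rw [TForm.forall_map]
    · exact wT.vars_tuple.imp fun _ h => ⟨hg, h.mono hT⟩
    · exact wE.vars_tuple.imp fun _ h => ⟨hg, h.mono hE⟩
  · rw [← Set.Ico_union_Ico_eq_Ico wT.le wE.le] at hi
    exact hi.elim (wT.normalized i) (wE.normalized i)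

theorem CompiledWF.letin (w1 : CompiledWF Γ τ1 n m t1 γ1 w)
    (w2 : CompiledWF (fun y => if y = x then some τ1 else Γ y) τ2 m k t2 γ2 w) :
    CompiledWF Γ τ2 n k (t2.tsubst x t1) (.and γ1 (γ2.tsubst x t1)) w := by
  have h1 : Set.Ico n m ⊆ Set.Ico n k := Set.Ico_subset_Ico le_rfl w2.le
  have h2 : Set.Ico m k ⊆ Set.Ico n k := Set.Ico_subset_Ico w1.le le_rfl
  have hx : (fun y => if y = x then some τ1 else Γ y) x = some t1.shape := by simp [w1.shape]
  have hΓ : ∀ y ≠ x, ∀ τ, (fun y => if y = x then some τ1 else Γ y) y = some τ →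
      Γ y = some τ := fun y hy τ h => by simpa [hy] using h
  have ht1 := w1.vars_tuple.imp fun _ h => h.mono h1
  refine ⟨w1.le.trans w2.le, by simp [TForm.tsubst_eq_map, w2.shape], ?_,
    ⟨w1.vars_accept.mono h1, (w2.vars_accept.mono h2).tsubst ht1 hx hΓ⟩, fun i hi => ?_⟩
  · rw [TForm.tsubst_eq_map, TForm.forall_map]
    exact w2.vars_tuple.imp fun _ h => (h.mono h2).tsubst ht1 hx hΓ
  · rw [← Set.Ico_union_Ico_eq_Ico w1.le w2.le] at hi
    exact hi.elim (w1.normalized i) (w2.normalized i)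

theorem CompiledWF.call {fi : FInfo} (hfi : fi.WF) (hta : ta.shape = fi.argTy)
    (hva : ta.Forall (·.VarsIn (Set.Ico n (n + fi.nflips)) (Scoped Γ)))
    (hw : ∀ i < fi.nflips, ∀ b, w (n + i) b = fi.wf i b) :
    CompiledWF Γ fi.retTy n (n + fi.nflips)
      ((fi.tf.shift n).tsubst fi.arg ta) ((fi.gf.shift n).tsubst fi.arg ta) w := by
  have hx : fi.ctx fi.arg = some ta.shape := by simp [FInfo.ctx, hta]
  have hΓ : ∀ y ≠ fi.arg, ∀ τ, fi.ctx y = some τ → Γ y = some τ := fun y hy _ h => by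
    simp [FInfo.ctx, hy] at h
  have hshift : ∀ i ∈ Set.Ico 0 fi.nflips, i + n ∈ Set.Ico n (n + fi.nflips) := by
    intro i hi
    simp only [Set.mem_Ico] at hi ⊢
    omega
  refine ⟨by omega, by simp [TForm.tsubst_eq_map, TForm.shift_eq_map, hfi.shape], ?_,
    (hfi.vars_accept.shift hshift).tsubst hva hx hΓ, fun i hi => ?_⟩
  · rw [TForm.tsubst_eq_map, TForm.shift_eq_map, TForm.forall_map, TForm.forall_map]
    exact hfi.vars_tuple.imp fun _ h => (h.shift hshift).tsubst hva hx hΓ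
  · simp only [Set.mem_Ico] at hi
    obtain ⟨j, hj, rfl⟩ : ∃ j < fi.nflips, i = n + j := ⟨i - n, by omega, by omega⟩
    rw [hw j hj, hw j hj]
    exact hfi.normalized j ⟨j.zero_le, hj⟩

end CompiledWF

theorem TComp.wf {Γ : String → Option Ty} {Φ : String → Option FInfo} {e : Exp} {τ : Ty}
    {n m : ℕ} {t : TForm} {γ : Form} {w : ℕ → Bool → ℝ} (h : TComp Γ Φ e τ n m t γ w)
    (hΦ : ∀ f fi, Φ f = some fi → fi.WF) : CompiledWF Γ τ n m t γ w := by
  induction h with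
  | atom Γ Φ a τ t n w h =>
    obtain ⟨hs, hv⟩ := AExp.compT_wf h
    exact ⟨le_rfl, hs, hv, trivial, by simp⟩
  | fst Γ Φ a τ1 τ2 t1 t2 n w h =>
    obtain ⟨hs, hv⟩ := AExp.compT_wf h
    exact ⟨le_rfl, (Ty.prod.inj hs).1, hv.1, trivial, by simp⟩
  | snd Γ Φ a τ1 τ2 t1 t2 n w h =>
    obtain ⟨hs, hv⟩ := AExp.compT_wf h
    exact ⟨le_rfl, (Ty.prod.inj hs).2, hv.2, trivial, by simp⟩
  | pair Γ Φ a1 a2 τ1 τ2 t1 t2 n w h1 h2 =>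
    obtain ⟨hs1, hv1⟩ := AExp.compT_wf h1
    obtain ⟨hs2, hv2⟩ := AExp.compT_wf h2
    exact ⟨le_rfl, by simp [TForm.shape, hs1, hs2], ⟨hv1, hv2⟩, trivial, by simp⟩
  | flip Γ Φ θ n w _ _ hwt hwf =>
    refine ⟨n.le_succ, rfl, by simp [TForm.Forall, Form.VarsIn], trivial, fun i hi => ?_⟩
    obtain rfl : i = n := by simp at hi; omega
    rw [hwt, hwf]
    ring
  | obs Γ Φ a φa n w h =>
    exact ⟨le_rfl, rfl, trivial, (AExp.compT_wf h).2, by simp⟩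
  | ite Γ Φ a eT eE τ φg tT tE γT γE n m k w hg _ _ ihThen ihElse =>
    exact CompiledWF.ite (AExp.compT_wf hg).2 (ihThen hΦ) (ihElse hΦ)
  | letin Γ Φ x τ1 τ2 e1 e2 t1 t2 γ1 γ2 n m k w _ _ ih1 ih2 =>
    exact (ih1 hΦ).letin (ih2 hΦ)
  | call Γ Φ f a fi ta n w hf ha hw =>
    obtain ⟨hsa, hva⟩ := AExp.compT_wf ha
    exact CompiledWF.call (hΦ f fi hf) hsa hva hw

section Outcomes

variable {r : String → List Bool → Bool} {v : Val} {σ : ℕ → Bool}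

theorem outcome_ite {tT tE : TForm} {φg γT γE : Form} (hshape : tT.shape = tE.shape) :
    outcome ((tT.band φg).tor (tE.band (.not φg)))
        (.or (.and φg γT) (.and (.not φg) γE)) r v =
      fun σ => if φg.eval σ r then outcome tT γT r v σ else outcome tE γE r v σ := by
  funext σ
  rw [outcome, TForm.eval_tor_band_not hshape]
  cases h : φg.eval σ r <;> simp [outcome, Form.eval, h]

theorem outcome_letin {Γ : String → Option Ty} {ρ : String → Option Val} {x : String}
    {τ1 : Ty} {t1 t2 : TForm} {γ1 γ2 : Form} {s : Set ℕ} (ht1 : t1.shape = τ1)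
    (ht2 : t2.Forall (·.VarsIn s (Scoped fun y => if y = x then some τ1 else Γ y)))
    (hγ2 : γ2.VarsIn s (Scoped fun y => if y = x then some τ1 else Γ y)) :
    (τ1.vals.map fun v' => outcome t1 γ1 (progEnv ρ) v' σ *
        outcome t2 γ2 (progEnv fun y => if y = x then some v' else ρ y) v σ).sum =
      outcome (t2.tsubst x t1) (γ1.and (γ2.tsubst x t1)) (progEnv ρ) v σ := by
  set u := t1.eval σ (progEnv ρ)
  have hu : u ∈ τ1.vals.toFinset :=
    List.mem_toFinset.2 (Val.mem_vals_iff.2 (ht1 ▸ TForm.hasTy_eval))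
  have hsubst : ∀ φ : Form, φ.VarsIn s (Scoped fun y => if y = x then some τ1 else Γ y) →
      (φ.tsubst x t1).eval σ (progEnv ρ) =
        φ.eval σ (progEnv fun y => if y = x then some u else ρ y) := fun φ hφ =>
    Form.eval_tsubst_of_varsIn hφ (by simp [ht1]) (fun y p hyx _ => by simp [progEnv, hyx])
      fun p => by simp [progEnv, u]
  have ht : (t2.tsubst x t1).eval σ (progEnv ρ) =
      t2.eval σ (progEnv fun y => if y = x then some u else ρ y) := by
    rw [TForm.tsubst_eq_map]
    exact TForm.eval_map (ht2.imp hsubst)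
  rw [← List.sum_toFinset _ (Ty.nodup_vals τ1), Finset.sum_eq_single_of_mem u hu]
  · simp only [outcome, Form.eval, ht, hsubst γ2 hγ2]
    by_cases h1 : γ1.eval σ (progEnv ρ) <;> simp [h1, u]
  · intro v' _ hv'
    simp [outcome, Ne.symm hv', u]

theorem outcome_call {fi : FInfo} (hfi : fi.WF) {ta : TForm} {u : Val} {n : ℕ}
    (hta : ta.shape = fi.argTy) (hval : ∀ σ, ta.eval σ r = u) :
    outcome ((fi.tf.shift n).tsubst fi.arg ta) ((fi.gf.shift n).tsubst fi.arg ta) r v =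
      fun σ => outcome fi.tf fi.gf (progEnv (fi.argSubst u)) v
        (fun i => σ (i + n)) := by
  funext σ
  have hsubst : ∀ φ : Form, φ.VarsIn (Set.Ico 0 fi.nflips) (Scoped fi.ctx) →
      ((φ.shift n).tsubst fi.arg ta).eval σ r =
        φ.eval (fun i => σ (i + n)) (progEnv (fi.argSubst u)) :=
    fun φ hφ => by
      rw [Form.eval_tsubst_of_varsIn (hφ.shift (s' := Set.univ) fun _ _ => trivial)
        (by simp [FInfo.ctx, hta]) (fun y p hy ⟨τ, h, _⟩ => by simp [FInfo.ctx, hy] at h)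
        (r' := progEnv (fi.argSubst u))
        fun p => by simp [progEnv, FInfo.argSubst, hval], Form.eval_shift]
  have ht : ((fi.tf.shift n).tsubst fi.arg ta).eval σ r =
      fi.tf.eval (fun i => σ (i + n)) (progEnv (fi.argSubst u)) := by
    rw [TForm.tsubst_eq_map, TForm.shift_eq_map, TForm.map_map]
    exact TForm.eval_map (hfi.vars_tuple.imp hsubst)
  simp only [outcome, ht, hsubst fi.gf hfi.vars_accept]


end Outcomes

section OutcomeSums

variable {Γ : String → Option Ty} {w : ℕ → Bool → ℝ} {τ τ1 τ2 : Ty} {n m k : ℕ}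
  {tT tE t1 t2 : TForm} {γT γE γ1 γ2 φg : Form} {x : String}
  {r : String → List Bool → Bool} {v : Val}

theorem wsum_outcome_ite (wT : CompiledWF Γ τ n m tT γT w) (wE : CompiledWF Γ τ m k tE γE w)
    {c : Bool} (hc : ∀ σ, φg.eval σ r = c) :
    wsum (Finset.Ico n k) w (outcome ((tT.band φg).tor (tE.band (.not φg)))
        (.or (.and φg γT) (.and (.not φg) γE)) r v) =
      if c then wsum (Finset.Ico n m) w (outcome tT γT r v)
      else wsum (Finset.Ico m k) w (outcome tE γE r v) := by
  have hdisj := Finset.Ico_disjoint_Ico_consecutive n m k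
  simp only [outcome_ite (wT.shape.trans wE.shape.symm), hc,
    ← Finset.Ico_union_Ico_eq_Ico wT.le wE.le]
  cases c
  · rw [if_neg Bool.false_ne_true, Finset.union_comm]
    exact wsum_union_of_dependsOn hdisj.symm (wE.dependsOn _ _)
      fun i hi => wT.normalized i (by simpa using hi)
  · exact wsum_union_of_dependsOn hdisj (wT.dependsOn _ _)
      fun i hi => wE.normalized i (by simpa using hi)

theorem wsum_outcome_letin {ρ : String → Option Val} (w1 : CompiledWF Γ τ1 n m t1 γ1 w)
    (w2 : CompiledWF (fun y => if y = x then some τ1 else Γ y) τ2 m k t2 γ2 w) :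
    wsum (Finset.Ico n k) w (outcome (t2.tsubst x t1) (γ1.and (γ2.tsubst x t1)) (progEnv ρ) v) =
      (τ1.vals.map fun v' => wsum (Finset.Ico n m) w (outcome t1 γ1 (progEnv ρ) v') *
        wsum (Finset.Ico m k) w
          (outcome t2 γ2 (progEnv fun y => if y = x then some v' else ρ y) v)).sum := by
  have hlet := funext fun σ => (outcome_letin (σ := σ) (ρ := ρ) (v := v) (γ1 := γ1)
    w1.shape w2.vars_tuple w2.vars_accept).symm
  rw [hlet, ← Finset.Ico_union_Ico_eq_Ico w1.le w2.le, wsum_list_sum]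
  refine congrArg List.sum (List.map_congr_left fun v' _ => ?_)
  exact wsum_union_mul (Finset.Ico_disjoint_Ico_consecutive n m k)
    (w1.dependsOn _ _) (w2.dependsOn _ _)

theorem wsum_outcome_call {fi : FInfo} (hfi : fi.WF) {ta : TForm} {u : Val}
    (hta : ta.shape = fi.argTy) (hval : ∀ σ, ta.eval σ r = u)
    (hw : ∀ i < fi.nflips, ∀ b, w (n + i) b = fi.wf i b) :
    wsum (Finset.Ico n (n + fi.nflips)) w
        (outcome ((fi.tf.shift n).tsubst fi.arg ta) ((fi.gf.shift n).tsubst fi.arg ta) r v) =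
      wsum (Finset.Ico 0 fi.nflips) fi.wf (outcome fi.tf fi.gf (progEnv (fi.argSubst u)) v) := by
  have hIco : Finset.Ico n (n + fi.nflips) =
      (Finset.Ico 0 fi.nflips).map (addRightEmbedding n) := by
    rw [Finset.map_add_right_Ico, zero_add, add_comm]
  rw [hIco, outcome_call hfi hta hval]
  refine (wsum_map (addRightEmbedding n) _).trans (wsum_congr_weights fun i hi b => ?_)
  simpa [add_comm] using hw i (by simpa using hi) b

end OutcomeSums

theorem TComp.sem_eq_wsum {Γ : String → Option Ty} {Φ : String → Option FInfo} {e : Exp}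
    {τ : Ty} {n m : ℕ} {t : TForm} {γ : Form} {w : ℕ → Bool → ℝ}
    (h : TComp Γ Φ e τ n m t γ w) {T : String → Val → Val → ℝ}
    (hΦ : ∀ f fi, Φ f = some fi → fi.WF)
    (hT : ∀ f fi, Φ f = some fi → fi.Denotes (T f)) {ρ : String → Option Val}
    (hρ : EnvHasTy ρ Γ) (v : Val) :
    (e.substEnv ρ).sem T v = wsum (Finset.Ico n m) w (outcome t γ (progEnv ρ) v) := by
  induction h generalizing ρ v with
  | atom Γ Φ a τ t n w h =>
    obtain ⟨u, hsub, -, hu⟩ := AExp.compT_eval h hρ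
    rw [Finset.Ico_self, wsum_empty]
    simp [Exp.substEnv, hsub, Exp.sem, outcome, hu, Form.eval, eq_comm]
  | fst Γ Φ a τ1 τ2 t1 t2 n w h =>
    obtain ⟨u, hsub, hty, hu⟩ := AExp.compT_eval h hρ
    rcases u with _ | ⟨u1, u2⟩
    · simp [Val.hasTy] at hty
    have hu1 : ∀ σ, t1.eval σ (progEnv ρ) = u1 :=
      fun σ => (by simpa [TForm.eval] using hu σ : _ ∧ _).1
    rw [Finset.Ico_self, wsum_empty]
    simp [Exp.substEnv, hsub, Exp.sem, outcome, hu1, Form.eval, eq_comm]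
  | snd Γ Φ a τ1 τ2 t1 t2 n w h =>
    obtain ⟨u, hsub, hty, hu⟩ := AExp.compT_eval h hρ
    rcases u with _ | ⟨u1, u2⟩
    · simp [Val.hasTy] at hty
    have hu2 : ∀ σ, t2.eval σ (progEnv ρ) = u2 :=
      fun σ => (by simpa [TForm.eval] using hu σ : _ ∧ _).2
    rw [Finset.Ico_self, wsum_empty]
    simp [Exp.substEnv, hsub, Exp.sem, outcome, hu2, Form.eval, eq_comm]
  | pair Γ Φ a1 a2 τ1 τ2 t1 t2 n w h1 h2 =>
    obtain ⟨u1, hsub1, -, hu1⟩ := AExp.compT_eval h1 hρ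
    obtain ⟨u2, hsub2, -, hu2⟩ := AExp.compT_eval h2 hρ
    rw [Finset.Ico_self, wsum_empty]
    simp [Exp.substEnv, hsub1, hsub2, Exp.sem, outcome, TForm.eval, hu1, hu2, Form.eval, eq_comm]
  | flip Γ Φ θ n w _ _ hwt hwf =>
    rw [Nat.Ico_succ_singleton, wsum_singleton]
    rcases v with (_ | _) | _ <;>
      simp [Exp.substEnv, Exp.sem, outcome, TForm.eval, Form.eval, hwt, hwf]
  | obs Γ Φ a φa n w h =>
    obtain ⟨u, hsub, hty, hu⟩ := AExp.compT_eval h hρ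
    rcases u with c | _
    · have hc : ∀ σ, φa.eval σ (progEnv ρ) = c := fun σ => by simpa [TForm.eval] using hu σ
      rw [Finset.Ico_self, wsum_empty]
      cases c <;> simp [Exp.substEnv, hsub, Exp.sem, outcome, TForm.eval, Form.eval, hc, eq_comm]
    · simp [Val.hasTy] at hty
  | ite Γ Φ a eT eE τ φg tT tE γT γE n m k w hg hthen helse ihThen ihElse =>
    obtain ⟨u, hsub, hty, hu⟩ := AExp.compT_eval hg hρ
    rcases u with c | _
    swap
    · simp [Val.hasTy] at hty
    have hc : ∀ σ, φg.eval σ (progEnv ρ) = c := fun σ => by simpa [TForm.eval] using hu σ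
    rw [wsum_outcome_ite (TComp.wf hthen hΦ) (TComp.wf helse hΦ) hc, ← ihThen hΦ hT hρ v,
      ← ihElse hΦ hT hρ v]
    cases c <;> simp [Exp.substEnv, hsub, Exp.sem]
  | letin Γ Φ x τ1 τ2 e1 e2 t1 t2 γ1 γ2 n m k w h1 h2 ih1 ih2 =>
    rw [wsum_outcome_letin (TComp.wf h1 hΦ) (TComp.wf h2 hΦ)]
    simp only [Exp.substEnv, Exp.sem]
    refine congrArg List.sum (List.map_congr_left fun v' hv' => ?_)
    have henv : (fun y => (if y = x then none else ρ y).or (if y = x then some v' else none)) =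
        fun y => if y = x then some v' else ρ y := by
      funext y
      by_cases hy : y = x <;> simp [hy]
    have hρ' : EnvHasTy (fun y => if y = x then some v' else ρ y)
        (fun y => if y = x then some τ1 else Γ y) := fun y τy hy => by
      by_cases hyx : y = x
      · simp only [hyx, if_true, Option.some.injEq] at hy ⊢
        exact ⟨v', rfl, hy ▸ Val.mem_vals_iff.1 hv'⟩
      · simpa [hyx] using hρ y τy (by simpa [hyx] using hy)
    rw [ih1 hΦ hT hρ v', Exp.substEnv_substEnv, henv, ih2 hΦ hT hρ' v]
  | call Γ Φ f a fi ta n w hf ha hw =>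
    obtain ⟨u, hsub, hu, hval⟩ := AExp.compT_eval ha hρ
    rw [wsum_outcome_call (hΦ f fi hf) (AExp.compT_wf ha (s := ∅)).1 hval hw,
      ← hT f fi hf u hu v]
    simp [Exp.substEnv, hsub, Exp.sem]

theorem PComp.sem_eq_wsum {Φ : String → Option FInfo} {p : Prog} {τ : Ty} {t : TForm}
    {γ : Form} {n : ℕ} {w : ℕ → Bool → ℝ} (h : PComp Φ p τ t γ n w)
    {T : String → Val → Val → ℝ}
    (hΦ : ∀ f fi, Φ f = some fi → fi.WF) (hT : ∀ f fi, Φ f = some fi → fi.Denotes (T f))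
    (v : Val) : p.sem T v = wsum (Finset.Ico 0 n) w (outcome t γ (fun _ _ => false) v) := by
  induction h generalizing T with
  | main Φ e τ t γ n w h =>
    have hsem := TComp.sem_eq_wsum h hΦ hT (ρ := fun _ => none) (fun _ _ h => by cases h) v
    rwa [Exp.substEnv_none] at hsem
  | fdef Φ f x τ1 τ2 body rest τ t γ n w k tf gf wf hbody hrest ih =>
    refine ih (fun g fi hg => ?_) (fun g fi hg => ?_)
    all_goals by_cases hgf : g = f
    · simp only [hgf, if_true, Option.some.injEq] at hg
      exact hg ▸ TComp.wf hbody hΦ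
    · simp only [hgf, if_false] at hg
      exact hΦ g fi hg
    · simp only [hgf, if_true, Option.some.injEq] at hg ⊢
      subst hg
      intro u hu v
      refine TComp.sem_eq_wsum hbody hΦ hT (fun y τy hy => ?_) v
      by_cases hyx : y = x <;> simp_all
    · simp only [hgf, if_false] at hg ⊢
      exact hT g fi hg

theorem typed_program_correctness_general
    (p : Prog) (τ : Ty) (t : TForm) (γ : Form) (n : ℕ) (w : ℕ → Bool → ℝ)
    (h : PComp (fun _ => none) p τ t γ n w)
    (v : Val) :
    p.sem (fun _ _ _ => 0) v = WMC n ((t.tiff v.toForm).and γ) w := by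
  rw [PComp.sem_eq_wsum h (fun _ _ h => by cases h) (fun _ _ h => by cases h) v, WMC_eq_wsum,
    Finset.range_eq_Ico]
  congr 1
  funext σ
  simp [outcome, Form.eval, Form.eval_tiff_toForm]

/-- **Typed Program Correctness.**  If a closed Dice program `p` compiles as
`∅, ∅ ⊢ p : τ ⤳ (φ̂, γ, w)`, then for any value `v : τ` the unnormalized
semantics (starting from the empty function table) satisfies
`⟦p⟧(v) = WMC((φ̂ ⇔τ v) ∧ γ, w)`. -/
theorem typed_program_correctness
    (p : Prog) (τ : Ty) (t : TForm) (γ : Form) (n : ℕ) (w : ℕ → Bool → ℝ)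
    (h : PComp (fun _ => none) p τ t γ n w)
    (v : Val) (hv : v.hasTy τ) :
    p.sem (fun _ _ _ => 0) v = WMC n ((t.tiff v.toForm).and γ) w :=
  typed_program_correctness_general p τ t γ n w h v
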